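/- Let H be a bounded self-adjoint operator on a complex Hilbert space 𝓗, ψ a unit vector, λ ∈ ℝ, and let ΔE = ΔE(H,ψ,λ) := inf{ε ∈ (0,∞) : 2ε·Im⟨ψ, (H − λ − iε)⁻¹ ψ⟩ ≥ 1}. If ΔE > 0, then 𝒯(H,ψ) ≥ 1/ΔE. -/

import Mathlib

open MeasureTheory Complex
open scoped ENNReal

variable {𝓗 : Type*} [NormedAddCommGroup 𝓗] [InnerProductSpace ℂ 𝓗] [CompleteSpace 𝓗]

/-- The unitary group `e^{-iHt}` generated by a bounded operator `H`,
defined via the exponential series. -/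
noncomputable def timeEvolution (H : 𝓗 →L[ℂ] 𝓗) (t : ℝ) : 𝓗 →L[ℂ] 𝓗 :=
  NormedSpace.exp ((-(Complex.I * (t : ℂ))) • H)

/-- The sojourn time `𝒯(H,ψ) = ∫_ℝ |⟨ψ, e^{-iHt}ψ⟩|² dt ∈ [0,∞]`. -/
noncomputable def sojournTime (H : 𝓗 →L[ℂ] 𝓗) (ψ : 𝓗) : ℝ≥0∞ :=
  ∫⁻ t : ℝ, ENNReal.ofReal (‖(inner ℂ ψ (timeEvolution H t ψ) : ℂ)‖ ^ 2)

/-- The resolvent `R(z) = (H - z)⁻¹` (via `Ring.inverse`; for self-adjoint `H`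
and `Im z ≠ 0` the operator `H - z` is invertible and this is its genuine inverse). -/
noncomputable def resolventOp (H : 𝓗 →L[ℂ] 𝓗) (z : ℂ) : 𝓗 →L[ℂ] 𝓗 :=
  Ring.inverse (H - z • 1)

/-- Lavine's energy width `ΔE(H,ψ,λ) = inf{ε ∈ (0,∞) : 2ε·Im⟨ψ, (H−λ−iε)⁻¹ψ⟩ ≥ 1}`. -/
noncomputable def energyWidth (H : 𝓗 →L[ℂ] 𝓗) (ψ : 𝓗) (lam : ℝ) : ℝ :=
  sInf {ε : ℝ | 0 < ε ∧
    1 ≤ 2 * ε * (inner ℂ ψ (resolventOp H ((lam : ℂ) + (ε : ℂ) * Complex.I) ψ) : ℂ).im}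


/-!
For `Im z = ε > 0` the resolvent is a Laplace transform of the time evolution,
`R(z)ψ = i ∫₀^∞ e^{izt} e^{-iHt}ψ dt`, so `|⟨ψ, R(z)ψ⟩| ≤ ∫₀^∞ e^{-εt} |⟨ψ, e^{-iHt}ψ⟩| dt`.
By Cauchy–Schwarz against `e^{-εt}` this is at most `(2ε)^{-1/2} (𝒯/2)^{1/2}`, because
`|⟨ψ, e^{-iHt}ψ⟩|` is even in `t`. Hence every `ε` in the set defining `ΔE` satisfies
`1 ≤ ε 𝒯`, and taking the infimum gives `1/ΔE ≤ 𝒯`.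
-/

open Set Filter Topology

section TimeEvolution

variable {H : 𝓗 →L[ℂ] 𝓗}

theorem timeEvolution_eq_exp_smul (H : 𝓗 →L[ℂ] 𝓗) (t : ℝ) :
    timeEvolution H t = NormedSpace.exp (t • (-I) • H) := by
  rw [timeEvolution, ← Complex.coe_smul, smul_smul, mul_neg, mul_comm]

theorem hasDerivAt_timeEvolution_apply (H : 𝓗 →L[ℂ] 𝓗) (φ : 𝓗) (t : ℝ) :
    HasDerivAt (fun s : ℝ => timeEvolution H s φ) (timeEvolution H t ((-I) • H φ)) t := by
  simp_rw [timeEvolution_eq_exp_smul]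
  exact ((ContinuousLinearMap.apply ℂ 𝓗 φ).restrictScalars ℝ).hasFDerivAt.comp_hasDerivAt t
    (hasDerivAt_exp_smul_const ((-I) • H) t)

theorem continuous_timeEvolution_apply (H : 𝓗 →L[ℂ] 𝓗) (φ : 𝓗) :
    Continuous fun t : ℝ => timeEvolution H t φ :=
  continuous_iff_continuousAt.2 fun t => (hasDerivAt_timeEvolution_apply H φ t).continuousAt

theorem timeEvolution_neg (hH : IsSelfAdjoint H) (t : ℝ) :
    timeEvolution H (-t) = star (timeEvolution H t) := by
  rw [timeEvolution, timeEvolution, NormedSpace.star_exp, star_smul, hH.star_eq]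
  simp

theorem timeEvolution_mem_unitary (hH : IsSelfAdjoint H) (t : ℝ) :
    timeEvolution H t ∈ unitary (𝓗 →L[ℂ] 𝓗) := by
  let : NormedAlgebra ℚ (𝓗 →L[ℂ] 𝓗) := NormedAlgebra.restrictScalars ℚ ℂ _
  apply NormedSpace.exp_mem_unitary_of_mem_skewAdjoint
  rw [skewAdjoint.mem_iff, star_smul, hH.star_eq, ← neg_smul]
  simp

theorem norm_timeEvolution_apply (hH : IsSelfAdjoint H) (t : ℝ) (φ : 𝓗) :
    ‖timeEvolution H t φ‖ = ‖φ‖ :=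
  ContinuousLinearMap.norm_map_of_mem_unitary (timeEvolution_mem_unitary hH t) φ

theorem norm_inner_timeEvolution_neg (hH : IsSelfAdjoint H) (ψ : 𝓗) (t : ℝ) :
    ‖(inner ℂ ψ (timeEvolution H (-t) ψ) : ℂ)‖ = ‖(inner ℂ ψ (timeEvolution H t ψ) : ℂ)‖ := by
  rw [timeEvolution_neg hH, ContinuousLinearMap.star_eq_adjoint,
    ContinuousLinearMap.adjoint_inner_right, ← inner_conj_symm, RCLike.norm_conj]

end TimeEvolution

theorem norm_cexp_I_mul_mul (z : ℂ) (t : ℝ) : ‖cexp (I * z * t)‖ = Real.exp (-z.im * t) := by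
  rw [Complex.norm_exp]
  simp

section Laplace

variable {H : 𝓗 →L[ℂ] 𝓗} {z : ℂ}

theorem integrableOn_laplace_timeEvolution (hH : IsSelfAdjoint H) (hz : 0 < z.im) (φ : 𝓗) :
    IntegrableOn (fun t : ℝ => (I * cexp (I * z * t)) • timeEvolution H t φ) (Ioi 0) := by
  refine Integrable.mono' ((exp_neg_integrableOn_Ioi 0 hz).mul_const ‖φ‖) ?_ ?_
  · exact ((continuous_const.mul (continuous_const.mul continuous_ofReal).cexp).smul
      (continuous_timeEvolution_apply H φ)).aestronglyMeasurable
  · filter_upwards with t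
    rw [norm_smul, norm_mul, norm_I, one_mul, norm_cexp_I_mul_mul, norm_timeEvolution_apply hH]

theorem integral_laplace_timeEvolution_sub_smul (hH : IsSelfAdjoint H) (hz : 0 < z.im) (φ : 𝓗) :
    ∫ t : ℝ in Ioi 0, (I * cexp (I * z * t)) • timeEvolution H t ((H - z • 1) φ) = φ := by
  set F : ℝ → 𝓗 := fun t => (-cexp (I * z * t)) • timeEvolution H t φ
  have hF : ∀ t ∈ Ici (0 : ℝ),
      HasDerivAt F ((I * cexp (I * z * t)) • timeEvolution H t ((H - z • 1) φ)) t := by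
    intro t _
    have hexp : HasDerivAt (fun s : ℝ => cexp (I * z * s)) (I * z * cexp (I * z * t)) t := by
      simpa [mul_comm] using ((hasDerivAt_id (t : ℂ)).const_mul (I * z)).cexp.comp_ofReal
    convert hexp.neg.smul (hasDerivAt_timeEvolution_apply H φ t) using 1
    · rfl
    simp only [sub_apply, smul_apply, one_apply_eq_self, map_sub, map_smul, Pi.neg_apply,
      neg_smul, map_neg, smul_neg, neg_neg]
    match_scalars <;> ring
  have hF_tendsto : Tendsto F atTop (𝓝 0) := by
    have hdecay : Tendsto (fun t : ℝ => Real.exp (-z.im * t) * ‖φ‖) atTop (𝓝 0) := by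
      simpa using (Real.tendsto_exp_comp_nhds_zero.2
        (tendsto_id.const_mul_atTop_of_neg (neg_neg_of_pos hz))).mul_const ‖φ‖
    refine squeeze_zero_norm (fun t => le_of_eq ?_) hdecay
    rw [norm_smul, norm_neg, norm_cexp_I_mul_mul, norm_timeEvolution_apply hH]
  have hF0 : F 0 = -φ := by
    simp [F, timeEvolution]
  rw [integral_Ioi_of_hasDerivAt_of_tendsto' hF
    (integrableOn_laplace_timeEvolution hH hz _) hF_tendsto, hF0, zero_sub, neg_neg]

theorem isUnit_sub_smul_one (hH : IsSelfAdjoint H) (hz : z.im ≠ 0) : IsUnit (H - z • 1) := by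
  have hz' : z ∉ spectrum ℂ H := fun hmem => hz (by rw [hH.mem_spectrum_eq_re hmem]; simp)
  rw [spectrum.notMem_iff, Algebra.algebraMap_eq_smul_one] at hz'
  simpa using hz'.neg

theorem resolventOp_apply_eq_integral (hH : IsSelfAdjoint H) (hz : 0 < z.im) (ψ : 𝓗) :
    resolventOp H z ψ = ∫ t : ℝ in Ioi 0, (I * cexp (I * z * t)) • timeEvolution H t ψ := by
  have hR : (H - z • 1) (resolventOp H z ψ) = ψ := by
    change ((H - z • 1) * Ring.inverse (H - z • 1)) ψ = ψ
    rw [Ring.mul_inverse_cancel _ (isUnit_sub_smul_one hH hz.ne'), one_apply_eq_self]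
  conv_lhs => rw [← integral_laplace_timeEvolution_sub_smul hH hz (resolventOp H z ψ), hR]

theorem enorm_inner_resolventOp_le (hH : IsSelfAdjoint H) (hz : 0 < z.im) (ψ : 𝓗) :
    ‖(inner ℂ ψ (resolventOp H z ψ) : ℂ)‖ₑ ≤
      ∫⁻ t in Ioi 0, ENNReal.ofReal (Real.exp (-z.im * t)) *
        ‖(inner ℂ ψ (timeEvolution H t ψ) : ℂ)‖ₑ := by
  rw [resolventOp_apply_eq_integral hH hz,
    ← integral_inner (integrableOn_laplace_timeEvolution hH hz ψ)]
  refine (enorm_integral_le_lintegral_enorm _).trans_eq (lintegral_congr fun t => ?_)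
  rw [inner_smul_right, enorm_mul, enorm_mul, ← ofReal_norm I, norm_I, ENNReal.ofReal_one,
    one_mul, ← ofReal_norm, norm_cexp_I_mul_mul]

end Laplace

theorem lintegral_mul_sq_le {α : Type*} [MeasurableSpace α] (μ : Measure α) {f g : α → ℝ≥0∞}
    (hf : AEMeasurable f μ) (hg : AEMeasurable g μ) :
    (∫⁻ a, f a * g a ∂μ) ^ 2 ≤ (∫⁻ a, f a ^ 2 ∂μ) * ∫⁻ a, g a ^ 2 ∂μ := by
  have hCS := ENNReal.lintegral_mul_le_Lp_mul_Lq μ .two_two hf hg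
  simp only [Pi.mul_apply, ENNReal.rpow_two] at hCS
  calc (∫⁻ a, f a * g a ∂μ) ^ 2
      ≤ ((∫⁻ a, f a ^ 2 ∂μ) ^ (1 / 2 : ℝ) * (∫⁻ a, g a ^ 2 ∂μ) ^ (1 / 2 : ℝ)) ^ 2 :=
        pow_le_pow_left₀ zero_le hCS 2
    _ = (∫⁻ a, f a ^ 2 ∂μ) * ∫⁻ a, g a ^ 2 ∂μ := by
        rw [mul_pow, ← ENNReal.rpow_natCast, ← ENNReal.rpow_natCast, ← ENNReal.rpow_mul,
          ← ENNReal.rpow_mul]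
        norm_num

theorem lintegral_Ioi_ofReal_exp_neg_mul_sq {ε : ℝ} (hε : 0 < ε) :
    ∫⁻ t in Ioi (0 : ℝ), ENNReal.ofReal (Real.exp (-ε * t)) ^ 2 = (ENNReal.ofReal (2 * ε))⁻¹ := by
  have hsq : ∀ t : ℝ, ENNReal.ofReal (Real.exp (-ε * t)) ^ 2 =
      ENNReal.ofReal (Real.exp (-(2 * ε) * t)) := fun t => by
    rw [← ENNReal.ofReal_pow (Real.exp_nonneg _), ← Real.exp_nat_mul]
    ring_nf
  simp_rw [hsq]
  rw [← ofReal_integral_eq_lintegral_ofReal (exp_neg_integrableOn_Ioi 0 (by positivity))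
    (.of_forall fun _ => Real.exp_nonneg _), integral_exp_mul_Ioi (by linarith),
    ← ENNReal.ofReal_inv_of_pos (by positivity)]
  congr 1
  field_simp
  simp

theorem lintegral_eq_two_mul_setLIntegral_Ioi {f : ℝ → ℝ≥0∞} (hf : ∀ t, f (-t) = f t) :
    ∫⁻ t, f t = 2 * ∫⁻ t in Ioi 0, f t := by
  have hIic : ∫⁻ t in Iic 0, f t = ∫⁻ t in Ioi 0, f t := by
    rw [← setLIntegral_congr (Iio_ae_eq_Iic (a := (0 : ℝ))),
      ← (Measure.measurePreserving_neg volume).setLIntegral_comp_preimage_emb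
        (Homeomorph.neg ℝ).measurableEmbedding]
    simp [hf]
  rw [← lintegral_add_compl _ (measurableSet_Ioi (a := (0 : ℝ))), compl_Ioi, hIic, two_mul]

theorem sojournTime_eq_two_mul_setLIntegral_Ioi {H : 𝓗 →L[ℂ] 𝓗} (hH : IsSelfAdjoint H) (ψ : 𝓗) :
    sojournTime H ψ = 2 * ∫⁻ t in Ioi 0, ‖(inner ℂ ψ (timeEvolution H t ψ) : ℂ)‖ₑ ^ 2 := by
  rw [sojournTime, lintegral_eq_two_mul_setLIntegral_Ioi fun t => by
    rw [norm_inner_timeEvolution_neg hH]]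
  simp_rw [ENNReal.ofReal_pow (norm_nonneg _), ofReal_norm]

theorem sq_ofReal_two_mul_im_mul_enorm_inner_resolventOp_le {H : 𝓗 →L[ℂ] 𝓗}
    (hH : IsSelfAdjoint H) {z : ℂ} (hz : 0 < z.im) (ψ : 𝓗) :
    (ENNReal.ofReal (2 * z.im) * ‖(inner ℂ ψ (resolventOp H z ψ) : ℂ)‖ₑ) ^ 2 ≤
      ENNReal.ofReal z.im * sojournTime H ψ := by
  set a := ENNReal.ofReal (2 * z.im)
  set L := ∫⁻ t in Ioi 0, ‖(inner ℂ ψ (timeEvolution H t ψ) : ℂ)‖ₑ ^ 2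
  have hCS : ‖(inner ℂ ψ (resolventOp H z ψ) : ℂ)‖ₑ ^ 2 ≤ a⁻¹ * L := by
    refine (pow_le_pow_left₀ zero_le (enorm_inner_resolventOp_le hH hz ψ) 2).trans ?_
    refine (lintegral_mul_sq_le _ (by fun_prop) ?_).trans_eq ?_
    · exact (continuous_const.inner (continuous_timeEvolution_apply H ψ)).enorm.aemeasurable
    · rw [lintegral_Ioi_ofReal_exp_neg_mul_sq hz]
  have ha : a ≠ 0 := by simpa [a] using hz
  calc (a * ‖(inner ℂ ψ (resolventOp H z ψ) : ℂ)‖ₑ) ^ 2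
      = a * a * ‖(inner ℂ ψ (resolventOp H z ψ) : ℂ)‖ₑ ^ 2 := by ring
    _ ≤ a * a * (a⁻¹ * L) := by gcongr
    _ = a * L := by
        rw [mul_assoc, ← mul_assoc a a⁻¹, ENNReal.mul_inv_cancel ha ENNReal.ofReal_ne_top,
          one_mul]
    _ = ENNReal.ofReal z.im * sojournTime H ψ := by
        rw [sojournTime_eq_two_mul_setLIntegral_Ioi hH, ← mul_assoc, ← ENNReal.ofReal_ofNat 2,
          ← ENNReal.ofReal_mul hz.le, mul_comm z.im]

theorem ofReal_one_div_sInf_le {S : Set ℝ} {T : ℝ≥0∞}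
    (hS : ∀ ε ∈ S, 1 ≤ ENNReal.ofReal ε * T) : ENNReal.ofReal (1 / sInf S) ≤ T := by
  rcases S.eq_empty_or_nonempty with rfl | ⟨ε₀, hε₀⟩
  · simp -- `sInf ∅ = 0` and `1 / 0 = 0`
  rcases eq_top_or_lt_top T with rfl | hT
  · exact le_top
  obtain ⟨t, ht0, rfl⟩ : ∃ t, 0 ≤ t ∧ T = ENNReal.ofReal t :=
    ⟨T.toReal, ENNReal.toReal_nonneg, (ENNReal.ofReal_toReal hT.ne).symm⟩
  have hS' : ∀ ε ∈ S, 1 ≤ ε * t := fun ε hε => by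
    have := hS ε hε
    rwa [← ENNReal.ofReal_mul' ht0, ENNReal.one_le_ofReal] at this
  have ht : 0 < t := ht0.lt_of_ne (by rintro rfl; linarith [hS' ε₀ hε₀])
  have hinf : 1 / t ≤ sInf S :=
    le_csInf ⟨ε₀, hε₀⟩ fun ε hε => (div_le_iff₀ ht).2 (by simpa using hS' ε hε)
  exact ENNReal.ofReal_le_ofReal ((one_div_le ((one_div_pos.2 ht).trans_le hinf) ht).2 hinf)

theorem sojournTime_ge_inv_energyWidth_general (H : 𝓗 →L[ℂ] 𝓗) (hH : IsSelfAdjoint H)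
    (ψ : 𝓗) (lam : ℝ) :
    ENNReal.ofReal (1 / energyWidth H ψ lam) ≤ sojournTime H ψ := by
  refine ofReal_one_div_sInf_le fun ε ⟨hε, hwidth⟩ => ?_
  set z : ℂ := lam + ε * I
  have hz : z.im = ε := by simp [z]
  have hlower : 1 ≤ ENNReal.ofReal (2 * ε) * ‖(inner ℂ ψ (resolventOp H z ψ) : ℂ)‖ₑ := by
    rw [← ofReal_norm, ← ENNReal.ofReal_mul (by positivity)]
    exact ENNReal.one_le_ofReal.2
      (hwidth.trans (mul_le_mul_of_nonneg_left (im_le_norm _) (by positivity)))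
  calc 1 ≤ (ENNReal.ofReal (2 * ε) * ‖(inner ℂ ψ (resolventOp H z ψ) : ℂ)‖ₑ) ^ 2 :=
        one_le_pow₀ hlower
    _ ≤ ENNReal.ofReal ε * sojournTime H ψ :=
        hz ▸ sq_ofReal_two_mul_im_mul_enorm_inner_resolventOp_le hH (hz ▸ hε) ψ

/-- If the energy width `ΔE(H,ψ,λ)` is positive, then
`𝒯(H,ψ) ≥ 1/ΔE(H,ψ,λ)`. -/
theorem sojournTime_ge_inv_energyWidth (H : 𝓗 →L[ℂ] 𝓗) (hH : IsSelfAdjoint H)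
    (ψ : 𝓗) (hψ : ‖ψ‖ = 1) (lam : ℝ) (h : 0 < energyWidth H ψ lam) :
    ENNReal.ofReal (1 / energyWidth H ψ lam) ≤ sojournTime H ψ :=
  sojournTime_ge_inv_energyWidth_general H hH ψ lam
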